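/- arXiv:2302.13420 — 8 statements merged into one kernel-verified Lean document; each statement's English description precedes it below -/
import Mathlib

section
/- Let 𝔽_q be a finite field with q ≥ 11 and characteristic p > 3. Then the plane curve C defined by the homogeneous polynomial F = x^{q-1} + y^{q-1} + z^{q-1} - 3(x+y+z)^{q-1} ∈ 𝔽_q[x,y,z] is tangent-filling over 𝔽_q: every point P ∈ ℙ²(𝔽_q) lies on the tangent line T_Q C at some smooth 𝔽_q-point Q of C. -/
open MvPolynomial

/-- `Q` is a smooth point (given by a nonzero coordinate representative) of the plane
curve defined by the homogeneous polynomial `F`. -/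
def SmoothPoint {K : Type*} [CommRing K] (F : MvPolynomial (Fin 3) K) (Q : Fin 3 → K) : Prop :=
  Q ≠ 0 ∧ eval Q F = 0 ∧ ∃ i : Fin 3, eval Q (pderiv i F) ≠ 0

/-- The point with coordinates `P` lies on the tangent line to the curve `{F = 0}` at the
point with coordinates `Q`. -/
def OnTangentLine {K : Type*} [CommRing K] (F : MvPolynomial (Fin 3) K) (Q P : Fin 3 → K) : Prop :=
  eval Q (pderiv 0 F) * P 0 + eval Q (pderiv 1 F) * P 1 + eval Q (pderiv 2 F) * P 2 = 0

/-- The curve `{F = 0}` is tangent-filling: every point of the projective plane lies on the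
tangent line at some smooth point of the curve. -/
def TangentFilling {K : Type*} [CommRing K] (F : MvPolynomial (Fin 3) K) : Prop :=
  ∀ P : Fin 3 → K, P ≠ 0 → ∃ Q : Fin 3 → K, SmoothPoint F Q ∧ OnTangentLine F Q P

section Aux
variable {K : Type*} [Field K] [Fintype K]

set_option linter.unusedVariables false
set_option linter.unusedSectionVars false

private noncomputable def Fc (K : Type*) [Field K] [Fintype K] : MvPolynomial (Fin 3) K :=
  X 0 ^ (Fintype.card K - 1) + X 1 ^ (Fintype.card K - 1) + X 2 ^ (Fintype.card K - 1)
    - 3 * (X 0 + X 1 + X 2) ^ (Fintype.card K - 1)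

private lemma cast_qsub1 (hq : 11 ≤ Fintype.card K) : ((Fintype.card K - 1 : ℕ) : K) = -1 := by
  rw [Nat.cast_sub (by omega), Nat.cast_one, Nat.cast_card_eq_zero]; ring

private lemma pow_qsub2 {a : K} (ha : a ≠ 0) (hq : 11 ≤ Fintype.card K) :
    a ^ (Fintype.card K - 1 - 1) = a⁻¹ := by
  apply eq_inv_of_mul_eq_one_left
  have : a ^ (Fintype.card K - 1 - 1) * a = a ^ (Fintype.card K - 1) := by
    rw [← pow_succ]
    congr 1
    omega
  rw [this, FiniteField.pow_card_sub_one_eq_one a ha]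

private lemma eval_Fc {Q : Fin 3 → K} (hq : 11 ≤ Fintype.card K)
    (h0 : Q 0 ≠ 0) (h1 : Q 1 ≠ 0) (h2 : Q 2 ≠ 0) (hs : Q 0 + Q 1 + Q 2 ≠ 0) :
    eval Q (Fc K) = 0 := by
  have e : ∀ a : K, a ≠ 0 → a ^ (Fintype.card K - 1) = 1 :=
    fun a ha => FiniteField.pow_card_sub_one_eq_one a ha
  simp only [Fc, map_sub, map_add, map_mul, map_pow, eval_X, map_ofNat]
  rw [e _ h0, e _ h1, e _ h2, e _ hs]
  ring

private lemma eval_pderiv_Fc {Q : Fin 3 → K} (hq : 11 ≤ Fintype.card K) (i : Fin 3)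
    (hi : Q i ≠ 0) (hs : Q 0 + Q 1 + Q 2 ≠ 0) :
    eval Q (pderiv i (Fc K)) = -(Q i)⁻¹ + 3 * (Q 0 + Q 1 + Q 2)⁻¹ := by
  have h3 : (3 : MvPolynomial (Fin 3) K) = C 3 := (map_ofNat C 3).symm
  have key : eval Q (pderiv i (Fc K)) =
      ((Fintype.card K - 1 : ℕ) : K) * Q i ^ (Fintype.card K - 1 - 1)
        - 3 * (((Fintype.card K - 1 : ℕ) : K) * (Q 0 + Q 1 + Q 2) ^ (Fintype.card K - 1 - 1)) := by
    unfold Fc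
    fin_cases i <;>
      simp [h3, pderiv_C_mul, pderiv_pow, pderiv_X, Pi.single_apply]
  rw [key, cast_qsub1 hq, pow_qsub2 hi hq, pow_qsub2 hs hq]
  ring

private lemma master (hq : 11 ≤ Fintype.card K) (P : Fin 3 → K) (a b c : K)
    (ha : a ≠ 0) (hb : b ≠ 0) (hc : c ≠ 0) (hs : a + b + c ≠ 0) (hne : a ≠ b ∨ b ≠ c)
    (htan : (3*a - (a+b+c))*b*c*(P 0) + (3*b - (a+b+c))*a*c*(P 1)
      + (3*c - (a+b+c))*a*b*(P 2) = 0) :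
    SmoothPoint (Fc K) ![a,b,c] ∧ OnTangentLine (Fc K) ![a,b,c] P := by
  set Q : Fin 3 → K := ![a,b,c] with hQ
  have hQ0 : Q 0 = a := rfl
  have hQ1 : Q 1 = b := rfl
  have hQ2 : Q 2 = c := rfl
  have hsQ : Q 0 + Q 1 + Q 2 ≠ 0 := by rw [hQ0, hQ1, hQ2]; exact hs
  have g0 := eval_pderiv_Fc hq 0 (hQ0 ▸ ha) hsQ
  have g1 := eval_pderiv_Fc hq 1 (hQ1 ▸ hb) hsQ
  have g2 := eval_pderiv_Fc hq 2 (hQ2 ▸ hc) hsQ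
  rw [hQ0, hQ1, hQ2] at g0 g1 g2
  refine ⟨⟨?_, eval_Fc hq (hQ0 ▸ ha) (hQ1 ▸ hb) (hQ2 ▸ hc) hsQ, ?_⟩, ?_⟩
  · intro h
    exact ha (by rw [← hQ0, h]; rfl)
  · rcases hne with h | h
    · by_cases h0 : eval Q (pderiv 0 (Fc K)) ≠ 0
      · exact ⟨0, h0⟩
      · refine ⟨1, ?_⟩
        push_neg at h0
        rw [g0] at h0
        rw [g1]
        intro h1
        apply h
        have : a⁻¹ = b⁻¹ := by
          have e0 : a⁻¹ = 3 * (a+b+c)⁻¹ := by linear_combination -h0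
          have e1 : b⁻¹ = 3 * (a+b+c)⁻¹ := by linear_combination -h1
          rw [e0, e1]
        exact inv_injective this
    · by_cases h1 : eval Q (pderiv 1 (Fc K)) ≠ 0
      · exact ⟨1, h1⟩
      · refine ⟨2, ?_⟩
        push_neg at h1
        rw [g1] at h1
        rw [g2]
        intro h2
        apply h
        have : b⁻¹ = c⁻¹ := by
          have e0 : b⁻¹ = 3 * (a+b+c)⁻¹ := by linear_combination -h1
          have e1 : c⁻¹ = 3 * (a+b+c)⁻¹ := by linear_combination -h2
          rw [e0, e1]
        exact inv_injective this
  · unfold OnTangentLine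
    rw [g0, g1, g2]
    have hN : a * b * c * (a + b + c) ≠ 0 :=
      mul_ne_zero (mul_ne_zero (mul_ne_zero ha hb) hc) hs
    have key : ((-a⁻¹ + 3 * (a + b + c)⁻¹) * P 0 + (-b⁻¹ + 3 * (a + b + c)⁻¹) * P 1
        + (-c⁻¹ + 3 * (a + b + c)⁻¹) * P 2) * (a * b * c * (a + b + c)) =
        (3*a - (a+b+c))*b*c*(P 0) + (3*b - (a+b+c))*a*c*(P 1) + (3*c - (a+b+c))*a*b*(P 2) := by
      field_simp
      ring
    rcases mul_eq_zero.mp (key.trans htan) with h | h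
    · exact h
    · exact absurd h hN

private lemma two_ne (hp : 3 < ringChar K) : (2 : K) ≠ 0 := by
  haveI := ringChar.charP K
  intro h
  have h2 : (ringChar K : ℕ) ∣ 2 := by
    exact_mod_cast (CharP.cast_eq_zero_iff K (ringChar K) 2).mp (by exact_mod_cast h)
  have := Nat.le_of_dvd (by norm_num) h2
  omega

private lemma three_ne (hp : 3 < ringChar K) : (3 : K) ≠ 0 := by
  haveI := ringChar.charP K
  intro h
  have h2 : (ringChar K : ℕ) ∣ 3 := by
    exact_mod_cast (CharP.cast_eq_zero_iff K (ringChar K) 3).mp (by exact_mod_cast h)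
  have := Nat.le_of_dvd (by norm_num) h2
  omega

private lemma exists_m (hq : 11 ≤ Fintype.card K) (hp : 3 < ringChar K) :
    ∃ m : K, m ≠ 0 ∧ m + 1 ≠ 0 ∧ m - 1 ≠ 0 ∧ m - 2 ≠ 0 ∧ 2*m - 1 ≠ 0 ∧ m^2 - m + 1 ≠ 0 := by
  set f : Polynomial K :=
    Polynomial.X * (Polynomial.X + 1) * (Polynomial.X - 1) * (Polynomial.X - Polynomial.C 2)
      * (Polynomial.X - Polynomial.C 2⁻¹) * (Polynomial.X^2 - Polynomial.X + 1) with hf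
  have hmon : f.Monic := by
    rw [hf]; monicity!
  have hdeg : f.natDegree ≤ 7 := by
    rw [hf]; compute_degree
  obtain ⟨m, hm⟩ := f.exists_eval_ne_zero_of_natDegree_lt_card hmon.ne_zero
    (by
      rw [Cardinal.mk_fintype]
      exact_mod_cast lt_of_le_of_lt (by exact_mod_cast hdeg)
        (by exact_mod_cast (by omega : 7 < Fintype.card K)))
  rw [hf] at hm
  simp only [Polynomial.eval_mul, Polynomial.eval_add, Polynomial.eval_sub, Polynomial.eval_pow,
    Polynomial.eval_X, Polynomial.eval_C, Polynomial.eval_one, mul_ne_zero_iff] at hm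
  obtain ⟨⟨⟨⟨⟨h1, h2⟩, h3⟩, h4⟩, h5⟩, h6⟩ := hm
  refine ⟨m, h1, h2, h3, h4, ?_, h6⟩
  have h2' := two_ne (K := K) hp
  intro h
  apply h5
  have : m - 2⁻¹ = (2*m - 1) * 2⁻¹ := by
    field_simp
  rw [this, h, zero_mul]

private lemma case3 (hq : 11 ≤ Fintype.card K) (hp : 3 < ringChar K) :
    ∃ a b : K, a ≠ 0 ∧ b ≠ 0 ∧ a + b + 1 ≠ 0 ∧ (a ≠ b ∨ b ≠ 1) ∧
      9*(a*b) = (a+b+1)*(a*b+a+b) := by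
  obtain ⟨m, h1, h2, h3, h4, h5, h6⟩ := exists_m hq hp
  have h2' := two_ne (K := K) hp
  set a : K := -((m-1)*(m-2)) / (m*(m+1)) with ha'
  set b : K := -((2*m-1)*(m-1)) / (m+1) with hb'
  have hden : m*(m+1) ≠ 0 := mul_ne_zero h1 h2
  have ha : a ≠ 0 := by
    rw [ha']
    exact div_ne_zero (neg_ne_zero.mpr (mul_ne_zero h3 h4)) hden
  have hb : b ≠ 0 := by
    rw [hb']
    exact div_ne_zero (neg_ne_zero.mpr (mul_ne_zero h5 h3)) h2
  have hS : (a + b + 1) * m = -((2*m-1)*(m-2)) := by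
    rw [ha', hb']; field_simp; ring
  have hs : a + b + 1 ≠ 0 := by
    intro h
    rw [h, zero_mul] at hS
    exact mul_ne_zero h5 h4 (by linear_combination hS)
  have ha1 : a ≠ 1 := by
    intro h
    have hA : a * (m*(m+1)) = -((m-1)*(m-2)) := by
      rw [ha']; field_simp
    rw [h, one_mul] at hA
    have : (2:K) * (m^2 - m + 1) = 0 := by linear_combination hA
    rcases mul_eq_zero.mp this with h' | h'
    · exact h2' h'
    · exact h6 h'
  refine ⟨a, b, ha, hb, hs, ?_, ?_⟩
  · rcases eq_or_ne a b with h | h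
    · right; rw [← h]; exact ha1
    · left; exact h
  · have hM2 : (m^2*(m+1)^3) ≠ 0 := mul_ne_zero (pow_ne_zero _ h1) (pow_ne_zero _ h2)
    have hA : a * (m*(m+1)) = -((m-1)*(m-2)) := by rw [ha']; field_simp
    have hB : b * (m+1) = -((2*m-1)*(m-1)) := by rw [hb']; field_simp
    have key : (9*(a*b)) * (m^2*(m+1)^3) = ((a+b+1)*(a*b+a+b)) * (m^2*(m+1)^3) := by
      linear_combination (9*(m*(m+1))*(b*(m+1)) - ((a+b+1)*(m*(m+1)))*(b*(m+1)+(m+1))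
          - ((-((m-1)*(m-2)))*(-((2*m-1)*(m-1))) + (-((m-1)*(m-2)))*(m+1)
            + (-((2*m-1)*(m-1)))*(m*(m+1)))) * hA
        + (9*(m*(m+1))*(-((m-1)*(m-2)))
          - ((a+b+1)*(m*(m+1)))*((-((m-1)*(m-2))) + m*(m+1))
          - m*((-((m-1)*(m-2)))*(-((2*m-1)*(m-1))) + (-((m-1)*(m-2)))*(m+1)
            + (-((2*m-1)*(m-1)))*(m*(m+1)))) * hB
    exact mul_right_cancel₀ hM2 key

end Aux

theorem special_curve_tangent_filling
    (K : Type*) [Field K] [Fintype K]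
    (hq : 11 ≤ Fintype.card K) (hp : 3 < ringChar K) :
    TangentFilling
      (X 0 ^ (Fintype.card K - 1) + X 1 ^ (Fintype.card K - 1) + X 2 ^ (Fintype.card K - 1)
        - 3 * (X 0 + X 1 + X 2) ^ (Fintype.card K - 1) : MvPolynomial (Fin 3) K) := by
  intro P hP
  show ∃ Q : Fin 3 → K, SmoothPoint (Fc K) Q ∧ OnTangentLine (Fc K) Q P
  have h2' : (2:K) ≠ 0 := two_ne hp
  have h3' : (3:K) ≠ 0 := three_ne hp
  have h4' : (4:K) ≠ 0 := by
    intro h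
    rcases mul_eq_zero.mp (show (2:K)*2 = 0 by linear_combination h) with h' | h' <;>
      exact h2' h'
  by_cases ht : P 0 + P 1 + P 2 = 0
  · -- the point lies on the line x + y + z = 0
    by_cases hu0 : P 0 = 0
    · refine ⟨![2,1,1], master hq P 2 1 1 h2' one_ne_zero one_ne_zero ?_ (Or.inl ?_) ?_⟩
      · intro h; exact h4' (by linear_combination h)
      · intro h; exact one_ne_zero (by linear_combination h)
      · linear_combination 4*hu0 - 2*ht
    by_cases hv0 : P 1 = 0
    · refine ⟨![1,2,1], master hq P 1 2 1 one_ne_zero h2' one_ne_zero ?_ (Or.inl ?_) ?_⟩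
      · intro h; exact h4' (by linear_combination h)
      · intro h; exact one_ne_zero (by linear_combination -h)
      · linear_combination 4*hv0 - 2*ht
    by_cases hw0 : P 2 = 0
    · refine ⟨![1,1,2], master hq P 1 1 2 one_ne_zero one_ne_zero h2' ?_ (Or.inr ?_) ?_⟩
      · intro h; exact h4' (by linear_combination h)
      · intro h; exact one_ne_zero (by linear_combination -h)
      · linear_combination 4*hw0 - 2*ht
    · by_cases huv : P 0 = P 1
      · refine ⟨![2*(P 0), -(P 1), 2*(P 2)],
          master hq P (2*(P 0)) (-(P 1)) (2*(P 2)) (mul_ne_zero h2' hu0)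
            (neg_ne_zero.mpr hv0) (mul_ne_zero h2' hw0) ?_ (Or.inl ?_) ?_⟩
        · intro h
          exact mul_ne_zero h3' hv0 (by linear_combination 2*ht - h)
        · intro h
          exact mul_ne_zero h3' hv0 (by linear_combination h - 2*huv)
        · linear_combination ((-12:K) * (P 0) * (P 1) * (P 2)) * ht
      · refine ⟨![2*(P 0), 2*(P 1), -(P 2)],
          master hq P (2*(P 0)) (2*(P 1)) (-(P 2)) (mul_ne_zero h2' hu0)
            (mul_ne_zero h2' hv0) (neg_ne_zero.mpr hw0) ?_ (Or.inl ?_) ?_⟩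
        · intro h
          exact mul_ne_zero h3' hw0 (by linear_combination 2*ht - h)
        · intro h
          exact huv (mul_left_cancel₀ h2' h)
        · linear_combination ((-12:K) * (P 0) * (P 1) * (P 2)) * ht
  · -- sum nonzero
    by_cases hA : P 0 ≠ 0 ∧ P 1 + P 2 ≠ 0 ∧ 2*(P 0) ≠ P 1 + P 2
    · obtain ⟨h1, h2, h3⟩ := hA
      have hav : (2*(P 0)/(P 1 + P 2)) * (P 1 + P 2) = 2*(P 0) := div_mul_cancel₀ _ h2
      refine ⟨![2*(P 0)/(P 1 + P 2), 1, 1],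
        master hq P _ 1 1 (div_ne_zero (mul_ne_zero h2' h1) h2) one_ne_zero one_ne_zero
          ?_ (Or.inl ?_) ?_⟩
      · intro h
        have h2t : (2:K)*(P 0 + P 1 + P 2) = 0 := by
          linear_combination (P 1 + P 2)*h - hav
        rcases mul_eq_zero.mp h2t with h' | h'
        · exact h2' h'
        · exact ht h'
      · intro h
        exact h3 (by linear_combination (P 1 + P 2)*h - hav)
      · linear_combination (1 - 2*(P 0)/(P 1 + P 2))*hav
    by_cases hB : P 1 ≠ 0 ∧ P 0 + P 2 ≠ 0 ∧ 2*(P 1) ≠ P 0 + P 2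
    · obtain ⟨h1, h2, h3⟩ := hB
      have hav : (2*(P 1)/(P 0 + P 2)) * (P 0 + P 2) = 2*(P 1) := div_mul_cancel₀ _ h2
      refine ⟨![1, 2*(P 1)/(P 0 + P 2), 1],
        master hq P 1 _ 1 one_ne_zero (div_ne_zero (mul_ne_zero h2' h1) h2) one_ne_zero
          ?_ (Or.inl ?_) ?_⟩
      · intro h
        have h2t : (2:K)*(P 0 + P 1 + P 2) = 0 := by
          linear_combination (P 0 + P 2)*h - hav
        rcases mul_eq_zero.mp h2t with h' | h'
        · exact h2' h'
        · exact ht h'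
      · intro h
        exact h3 (by linear_combination -(P 0 + P 2)*h - hav)
      · linear_combination (1 - 2*(P 1)/(P 0 + P 2))*hav
    by_cases hC : P 2 ≠ 0 ∧ P 0 + P 1 ≠ 0 ∧ 2*(P 2) ≠ P 0 + P 1
    · obtain ⟨h1, h2, h3⟩ := hC
      have hav : (2*(P 2)/(P 0 + P 1)) * (P 0 + P 1) = 2*(P 2) := div_mul_cancel₀ _ h2
      refine ⟨![1, 1, 2*(P 2)/(P 0 + P 1)],
        master hq P 1 1 _ one_ne_zero one_ne_zero (div_ne_zero (mul_ne_zero h2' h1) h2)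
          ?_ (Or.inr ?_) ?_⟩
      · intro h
        have h2t : (2:K)*(P 0 + P 1 + P 2) = 0 := by
          linear_combination (P 0 + P 1)*h - hav
        rcases mul_eq_zero.mp h2t with h' | h'
        · exact h2' h'
        · exact ht h'
      · intro h
        exact h3 (by linear_combination -(P 0 + P 1)*h - hav)
      · linear_combination (1 - 2*(P 2)/(P 0 + P 1))*hav
    · push_neg at hA hB hC
      by_cases hu0 : P 0 = 0
      · by_cases hv0 : P 1 = 0
        · -- P = (0,0,w)
          refine ⟨![-1,3,1], master hq P (-1) 3 1 (neg_ne_zero.mpr one_ne_zero) h3'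
            one_ne_zero ?_ (Or.inl ?_) ?_⟩
          · intro h; exact h3' (by linear_combination h)
          · intro h; exact h4' (by linear_combination -h)
          · linear_combination (-18:K)*hu0 - 6*hv0
        · by_cases hw0 : P 2 = 0
          · -- P = (0,v,0)
            refine ⟨![-1,1,3], master hq P (-1) 1 3 (neg_ne_zero.mpr one_ne_zero)
              one_ne_zero h3' ?_ (Or.inl ?_) ?_⟩
            · intro h; exact h3' (by linear_combination h)
            · intro h; exact h2' (by linear_combination -h)
            · linear_combination (-18:K)*hu0 - 6*hw0
          · exfalso
            have e1 := hB hv0 (by intro h; exact hw0 (by linear_combination h - hu0))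
            have e2 := hC hw0 (by intro h; exact hv0 (by linear_combination h - hu0))
            have h3v : (3:K) * P 1 = 0 := by linear_combination 2*e1 + e2 + 3*hu0
            rcases mul_eq_zero.mp h3v with h' | h'
            · exact h3' h'
            · exact hv0 h'
      · by_cases hvw : P 1 + P 2 = 0
        · by_cases hv0 : P 1 = 0
          · -- P = (u,0,0)
            have hw0 : P 2 = 0 := by linear_combination hvw - hv0
            refine ⟨![1,-1,3], master hq P 1 (-1) 3 one_ne_zero
              (neg_ne_zero.mpr one_ne_zero) h3' ?_ (Or.inl ?_) ?_⟩
            · intro h; exact h3' (by linear_combination h)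
            · intro h; exact h2' (by linear_combination h)
            · linear_combination (-18:K)*hv0 - 6*hw0
          · exfalso
            by_cases huv : P 0 + P 1 = 0
            · have e := hB hv0 (by
                intro h
                have h2u : (2:K) * P 0 = 0 := by linear_combination huv + h - hvw
                rcases mul_eq_zero.mp h2u with h' | h'
                · exact absurd h' h2'
                · exact absurd h' hu0)
              have h4u : (4:K) * P 0 = 0 := by linear_combination -e - hvw + 3*huv
              rcases mul_eq_zero.mp h4u with h' | h'
              · exact h4' h'
              · exact hu0 h'
            · have hw0 : P 2 ≠ 0 := by
                intro h; exact hv0 (by linear_combination hvw - h)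
              have e := hC hw0 huv
              have huw : P 0 + P 2 ≠ 0 := by
                intro h
                have : (4:K) * P 1 = 0 := by linear_combination -e + 3*hvw - h
                rcases mul_eq_zero.mp this with h' | h'
                · exact h4' h'
                · exact hv0 h'
              have e2 := hB hv0 huw
              have h6v : (2:K) * ((3:K) * P 1) = 0 := by linear_combination e2 - e + 3*hvw
              rcases mul_eq_zero.mp h6v with h' | h'
              · exact h2' h'
              · rcases mul_eq_zero.mp h' with h'' | h''
                · exact h3' h''
                · exact hv0 h''
        · have e0 := hA hu0 hvw
          by_cases hv0 : P 1 = 0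
          · exfalso
            have hw0 : P 2 ≠ 0 := by
              intro h
              have h2u : (2:K) * P 0 = 0 := by linear_combination e0 + hv0 + h
              rcases mul_eq_zero.mp h2u with h' | h'
              · exact absurd h' h2'
              · exact absurd h' hu0
            have huv : P 0 + P 1 ≠ 0 := by
              intro h; exact hu0 (by linear_combination h - hv0)
            have e := hC hw0 huv
            have h3u : (3:K) * P 0 = 0 := by linear_combination 2*e0 + 3*hv0 + e
            rcases mul_eq_zero.mp h3u with h' | h'
            · exact h3' h'
            · exact hu0 h'
          · by_cases hw0 : P 2 = 0
            · exfalso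
              have huw : P 0 + P 2 ≠ 0 := by
                intro h; exact hu0 (by linear_combination h - hw0)
              have e := hB hv0 huw
              have h3u : (3:K) * P 0 = 0 := by linear_combination 2*e0 + e + 3*hw0
              rcases mul_eq_zero.mp h3u with h' | h'
              · exact h3' h'
              · exact hu0 h'
            · by_cases huw : P 0 + P 2 = 0
              · exfalso
                have huv : P 0 + P 1 ≠ 0 := by
                  intro h
                  have : (4:K) * P 0 = 0 := by linear_combination h + e0 + huw
                  rcases mul_eq_zero.mp this with h' | h'
                  · exact h4' h'
                  · exact hu0 h'
                have e := hC hw0 huv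
                have h6u : (2:K) * ((3:K) * P 0) = 0 := by
                  linear_combination e0 + 3*huw - e
                rcases mul_eq_zero.mp h6u with h' | h'
                · exact h2' h'
                · rcases mul_eq_zero.mp h' with h'' | h''
                  · exact h3' h''
                  · exact hu0 h''
              · -- the genuine diagonal case: P 0 = P 1 = P 2
                have e2 := hB hv0 huw
                have hv' : P 1 = P 0 := by
                  have h3uv : (3:K) * (P 0 - P 1) = 0 := by linear_combination e0 - e2
                  rcases mul_eq_zero.mp h3uv with h' | h'
                  · exact absurd h' h3'
                  · linear_combination -h'
                have hw' : P 2 = P 0 := by linear_combination -e0 - hv'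
                obtain ⟨a, b, ha, hb, hs, hne, hid⟩ := case3 hq hp
                refine ⟨![a, b, 1], master hq P a b 1 ha hb one_ne_zero hs hne ?_⟩
                linear_combination (P 0)*hid + ((3*b - (a+b+1))*a)*hv'
                  + ((3 - (a+b+1))*a*b)*hw'
end

section
/- Let 𝔽_q be a finite field of characteristic p > 3, and let C be the plane curve defined by F = x^{q-1} + y^{q-1} + z^{q-1} - 3(x+y+z)^{q-1} ∈ 𝔽_q[x,y,z]. Then a point [x:y:z] ∈ ℙ²(𝔽_q) lies on C (i.e., F(x,y,z) = 0) if and only if x·y·z·(x+y+z) ≠ 0. -/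
open MvPolynomial

theorem special_curve_rational_points
    (K : Type*) [Field K] [Fintype K] (hp : 3 < ringChar K)
    (P : Fin 3 → K) (hP : P ≠ 0) :
    eval P (X 0 ^ (Fintype.card K - 1) + X 1 ^ (Fintype.card K - 1) + X 2 ^ (Fintype.card K - 1)
        - 3 * (X 0 + X 1 + X 2) ^ (Fintype.card K - 1) : MvPolynomial (Fin 3) K) = 0
      ↔ P 0 * P 1 * P 2 * (P 0 + P 1 + P 2) ≠ 0 := by
  classical
  have hcast : ∀ n : ℕ, 0 < n → n < ringChar K → (n : K) ≠ 0 := by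
    intro n hn hlt h
    have := (CharP.cast_eq_zero_iff K (ringChar K) n).mp h
    have := Nat.le_of_dvd hn this
    omega
  have h1 : (1:K) ≠ 0 := one_ne_zero
  have h2 : (2:K) ≠ 0 := by simpa using hcast 2 (by norm_num) (by omega)
  have h3 : (3:K) ≠ 0 := by simpa using hcast 3 (by norm_num) (by omega)
  have hqe : 1 ≤ Fintype.card K - 1 := by have := Fintype.one_lt_card (α := K); omega
  have key : ∀ x : K, x ^ (Fintype.card K - 1) = if x = 0 then 0 else 1 := by
    intro x
    split_ifs with h
    · simp [h, zero_pow (by omega : Fintype.card K - 1 ≠ 0)]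
    · exact FiniteField.pow_card_sub_one_eq_one x h
  have hne : P 0 ≠ 0 ∨ P 1 ≠ 0 ∨ P 2 ≠ 0 := by
    by_contra h
    push_neg at h
    apply hP
    funext i
    fin_cases i <;> simp [h.1, h.2.1, h.2.2]
  simp only [eval_sub, eval_add, eval_mul, eval_pow, eval_X, map_ofNat, key]
  by_cases ha : P 0 = 0 <;> by_cases hb : P 1 = 0 <;> by_cases hc : P 2 = 0 <;>
    by_cases hs : P 0 + P 1 + P 2 = 0 <;>
    simp [ha, hb, hc, hs, sub_eq_zero]
  all_goals try norm_num
  all_goals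
    first

    | (rcases hne with h | h | h <;> [exact h ha; exact h hb; exact h hc])
    | (intro h; exact h2 (by linear_combination -h))
    | (intro h; exact h3 (by linear_combination h))
    | (split_ifs with hif <;> intro h
       · exact h2 (by linear_combination h)
       · exact h1 (by linear_combination -h))
end

section
/- Let 𝔽_q be a finite field of characteristic p > 3 and let K be an algebraic closure of 𝔽_q. The plane curve C defined by F = x^{q-1} + y^{q-1} + z^{q-1} - 3(x+y+z)^{q-1} has exactly one singular point over K, namely [1:1:1]: a point P ∈ ℙ²(K) satisfies F(P) = 0 and ∂F/∂x(P) = ∂F/∂y(P) = ∂F/∂z(P) = 0 if and only if P = [1:1:1]. -/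
open MvPolynomial

private lemma cubic_key' {F : Type*} [Field F] (h2 : (2:F) ≠ 0) (h3 : (3:F) ≠ 0)
    (a b c : F) (h1 : a + b + c = 1) (hp2 : 3*(a^2+b^2+c^2) = 1)
    (hp4 : 27*(a^4+b^4+c^4) = 1) : 3*a = 1 ∧ 3*b = 1 ∧ 3*c = 1 := by
  have h4 : (4:F) ≠ 0 := by
    intro h; apply h2; have h' : (2:F)*2 = 0 := by rw [← h]; norm_num
    rcases mul_eq_zero.mp h' with h|h <;> exact h
  have he2 : 6*(a*b+b*c+c*a) = 2 := by linear_combination 3*(a+b+c+1)*h1 - hp2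
  have he3 : 108*(a*b*c) = 4 := by
    linear_combination hp4 + (27*(a*b+b*c+c*a)*(a+b+c+1) - 27*(a^2+b^2+c^2)*(a+b+c+1)
      - 108*(a*b*c))*h1 + (9*(a*b+b*c+c*a) - 9)*hp2 + 6*he2
  have key : ∀ x : F, (4:F)*(3*x-1)^3 = 0 → 3*x = 1 := by
    intro x hx
    have hx3 : (3*x-1)^3 = 0 := by
      rcases mul_eq_zero.mp hx with h|h
      · exact absurd h h4
      · exact h
    have := pow_eq_zero_iff (n := 3) (by norm_num) |>.mp hx3
    linear_combination this
  refine ⟨key a ?_, key b ?_, key c ?_⟩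
  · linear_combination (108*a^2)*h1 - (18*a)*he2 + he3
  · linear_combination (108*b^2)*h1 - (18*b)*he2 + he3
  · linear_combination (108*c^2)*h1 - (18*c)*he2 + he3

private lemma eval_F' (L : Type*) [Field L] (n : ℕ) (P : Fin 3 → L) :
    eval P (X 0 ^ n + X 1 ^ n + X 2 ^ n - 3 * (X 0 + X 1 + X 2) ^ n :
      MvPolynomial (Fin 3) L) =
    P 0 ^ n + P 1 ^ n + P 2 ^ n - 3 * (P 0 + P 1 + P 2) ^ n := by
  simp

private lemma eval_pderiv_F' (L : Type*) [Field L] (n : ℕ) (P : Fin 3 → L) (i : Fin 3) :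
    eval P (pderiv i (X 0 ^ n + X 1 ^ n + X 2 ^ n - 3 * (X 0 + X 1 + X 2) ^ n :
      MvPolynomial (Fin 3) L)) =
    (n : L) * P i ^ (n-1) - 3 * ((n:L) * (P 0 + P 1 + P 2) ^ (n-1)) := by
  have h3 : ∀ j : Fin 3, pderiv j (3 : MvPolynomial (Fin 3) L) = 0 := by
    intro j
    rw [← map_ofNat (C : L →+* MvPolynomial (Fin 3) L) 3]
    exact pderiv_C
  fin_cases i <;>
  simp [pderiv_pow, pderiv_mul, h3, mul_comm, mul_assoc, mul_left_comm]

theorem special_curve_unique_singular_point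
    (K : Type*) [Field K] [Fintype K] (hp : 3 < ringChar K)
    (P : Fin 3 → AlgebraicClosure K) (hP : P ≠ 0) :
    (eval P (X 0 ^ (Fintype.card K - 1) + X 1 ^ (Fintype.card K - 1)
          + X 2 ^ (Fintype.card K - 1) - 3 * (X 0 + X 1 + X 2) ^ (Fintype.card K - 1) :
          MvPolynomial (Fin 3) (AlgebraicClosure K)) = 0 ∧
      ∀ i : Fin 3,
        eval P (pderiv i (X 0 ^ (Fintype.card K - 1) + X 1 ^ (Fintype.card K - 1)
          + X 2 ^ (Fintype.card K - 1) - 3 * (X 0 + X 1 + X 2) ^ (Fintype.card K - 1) :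
          MvPolynomial (Fin 3) (AlgebraicClosure K))) = 0)
    ↔ ∃ c : AlgebraicClosure K, c ≠ 0 ∧ P = fun _ => c := by
  set q := Fintype.card K with hqdef
  set p := ringChar K with hpdef
  haveI hcharK : CharP K p := ringChar.charP K
  haveI hpprime : Fact p.Prime := ⟨CharP.char_is_prime K p⟩
  haveI hcharL : CharP (AlgebraicClosure K) p :=
    charP_of_injective_algebraMap (algebraMap K (AlgebraicClosure K)).injective p
  obtain ⟨m, -, hcard⟩ := FiniteField.card K p
  have hq4 : 4 ≤ q := by
    have h1 : p ≤ p ^ (m : ℕ) := Nat.le_self_pow m.pos.ne' p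
    omega
  -- basic nonvanishing facts
  have hinj := (algebraMap K (AlgebraicClosure K)).injective
  have hcast : ∀ k : ℕ, ((k : K) ≠ 0) → ((k : AlgebraicClosure K) ≠ 0) := by
    intro k hk h
    apply hk; apply hinj
    rw [map_natCast, map_zero]; exact h
  have hKne : ∀ k : ℕ, 0 < k → k < p → ((k : K) ≠ 0) := by
    intro k hk0 hkp h
    have hdvd : p ∣ k := (CharP.cast_eq_zero_iff K p k).mp h
    have := Nat.le_of_dvd hk0 hdvd
    omega
  have h2L : (2 : AlgebraicClosure K) ≠ 0 := by
    have := hcast 2 (hKne 2 (by norm_num) (by omega))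
    simpa using this
  have h3L : (3 : AlgebraicClosure K) ≠ 0 := by
    have := hcast 3 (hKne 3 (by norm_num) (by omega))
    simpa using this
  have h3K : (3 : K) ≠ 0 := by
    have := hKne 3 (by norm_num) (by omega); simpa using this
  have h3pow : (3 : AlgebraicClosure K) ^ (q - 1) = 1 := by
    have h := FiniteField.pow_card_sub_one_eq_one (3 : K) h3K
    have h2 := congrArg (algebraMap K (AlgebraicClosure K)) h
    rw [map_pow, map_one, map_ofNat] at h2
    exact h2
  have hq0 : ((q : ℕ) : AlgebraicClosure K) = 0 := by
    have h := FiniteField.cast_card_eq_zero K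
    have h2 := congrArg (algebraMap K (AlgebraicClosure K)) h
    rw [map_natCast, map_zero] at h2
    exact h2
  have hn1 : (((q - 1 : ℕ)) : AlgebraicClosure K) = -1 := by
    rw [Nat.cast_sub (by omega), hq0, Nat.cast_one]; ring
  have hnm1 : ((q - 1 : ℕ)) - 1 = q - 2 := by omega
  have frob : ∀ x y : AlgebraicClosure K, (x + y) ^ q = x ^ q + y ^ q := by
    intro x y
    rw [hqdef, hcard]
    exact add_pow_char_pow x y p (m:ℕ)
  have h3q : (3 : AlgebraicClosure K) ^ q = 3 := by
    conv_lhs => rw [show q = (q - 1) + 1 by omega]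
    rw [pow_succ, h3pow, one_mul]
  constructor
  · rintro ⟨hF, hD⟩
    set s : AlgebraicClosure K := P 0 + P 1 + P 2 with hsdef
    have hder : ∀ i : Fin 3, P i ^ (q - 2) = 3 * s ^ (q - 2) := by
      intro i
      have h := hD i
      rw [eval_pderiv_F', hn1, hnm1] at h
      linear_combination -h
    have hs : s ≠ 0 := by
      intro h0
      apply hP
      funext i
      have h := hder i
      rw [h0, zero_pow (by omega), mul_zero] at h
      have := pow_eq_zero_iff (n := q - 2) (by omega) |>.mp h
      simpa using this
    set u : Fin 3 → AlgebraicClosure K := fun i => P i * s⁻¹ with hudef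
    have hu : ∀ i, u i ^ (q - 2) = 3 := by
      intro i
      rw [hudef]
      simp only
      rw [mul_pow, inv_pow, hder i, mul_assoc,
        mul_inv_cancel₀ (pow_ne_zero _ hs), mul_one]
    have h1 : u 0 + u 1 + u 2 = 1 := by
      have : u 0 + u 1 + u 2 = s * s⁻¹ := by rw [hudef]; simp only; rw [hsdef]; ring
      rw [this, mul_inv_cancel₀ hs]
    have huq : ∀ i, u i ^ q = 3 * u i ^ 2 := by
      intro i
      calc u i ^ q = u i ^ (q - 2) * u i ^ 2 := by
            rw [← pow_add]; congr 1; omega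
        _ = 3 * u i ^ 2 := by rw [hu i]
    have hp2 : 3 * (u 0 ^ 2 + u 1 ^ 2 + u 2 ^ 2) = 1 := by
      have h := congrArg (· ^ q) h1
      simp only [one_pow] at h
      rw [frob, frob, huq 0, huq 1, huq 2] at h
      linear_combination h
    have hp4 : 27 * (u 0 ^ 4 + u 1 ^ 4 + u 2 ^ 4) = 1 := by
      have h := congrArg (· ^ q) hp2
      simp only [one_pow] at h
      rw [mul_pow, frob, frob, h3q] at h
      have e : ∀ i, (u i ^ 2) ^ q = 9 * u i ^ 4 := by
        intro i
        rw [← pow_mul, mul_comm 2 q, pow_mul, huq i]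
        ring
      rw [e 0, e 1, e 2] at h
      linear_combination h
    obtain ⟨ha, hb, hc⟩ := cubic_key' h2L h3L (u 0) (u 1) (u 2) h1 hp2 hp4
    have hPval : ∀ i : Fin 3, 3 * u i = 1 → 3 * P i = s := by
      intro i hi
      have hi' : 3 * (P i * s⁻¹) = 1 := by rw [hudef] at hi; simpa using hi
      have hexp : 3 * P i = (3 * (P i * s⁻¹)) * s := by field_simp
      rw [hexp, hi', one_mul]
    have h0 := hPval 0 ha
    have h1' := hPval 1 hb
    have h2' := hPval 2 hc
    refine ⟨P 0, ?_, ?_⟩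
    · intro h
      rw [h, mul_zero] at h0
      exact hs h0.symm
    · funext i
      fin_cases i
      · rfl
      · exact mul_left_cancel₀ h3L (h1'.trans h0.symm) |>.symm ▸ rfl
      · exact mul_left_cancel₀ h3L (h2'.trans h0.symm) |>.symm ▸ rfl
  · rintro ⟨c, hc, rfl⟩
    have hkey : (3 : AlgebraicClosure K) * ((c + c + c)) ^ (q - 2) = c ^ (q - 2) := by
      have hh : (3 : AlgebraicClosure K) * 3 ^ (q - 2) = 1 := by
        rw [← pow_succ']
        rw [show (q - 2) + 1 = q - 1 by omega]
        exact h3pow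
      rw [show ((c : AlgebraicClosure K) + c + c) = 3 * c by ring, mul_pow, ← mul_assoc, hh,
        one_mul]
    constructor
    · rw [eval_F']
      have hkey1 : ((c : AlgebraicClosure K) + c + c) ^ (q - 1) = c ^ (q - 1) := by
        rw [show ((c : AlgebraicClosure K) + c + c) = 3 * c by ring, mul_pow, h3pow, one_mul]
      rw [hkey1]
      ring
    · intro i
      rw [eval_pderiv_F', hnm1]
      linear_combination (-(((q - 1 : ℕ) : AlgebraicClosure K))) * hkey
end

section
/- Let q be a prime power and let 𝔽 be the finite field with q² elements. The Hermitian curve H defined by the homogeneous polynomial F = x^{q+1} + y^{q+1} + z^{q+1} ∈ 𝔽[x,y,z] is tangent-filling over 𝔽: every point P ∈ ℙ²(𝔽) lies on the tangent line T_Q H at some smooth 𝔽-point Q of H. -/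
open MvPolynomial

set_option linter.unusedSectionVars false
set_option linter.unusedVariables false

section Aux

variable {K : Type*} [Field K] [Fintype K] [DecidableEq K]

lemma card_root_le (g : Polynomial K) (hg : g ≠ 0) :
    (Finset.univ.filter fun x => Polynomial.eval x g = 0).card ≤ g.natDegree := by
  calc (Finset.univ.filter fun x => Polynomial.eval x g = 0).card
      ≤ g.roots.toFinset.card := by
        apply Finset.card_le_card
        intro x hx
        simp only [Finset.mem_filter] at hx
        simp [Multiset.mem_toFinset, Polynomial.mem_roots, hg, Polynomial.IsRoot, hx.2]
    _ ≤ Multiset.card g.roots := Multiset.toFinset_card_le _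
    _ ≤ g.natDegree := Polynomial.card_roots' g

lemma exists_root (q : ℕ) (hq2 : 2 ≤ q) (hcard : Fintype.card K = q ^ 2)
    (A B D : K) (hA : A ≠ 0)
    (hval : ∀ s : K, (A*s^(q+1) + B*s^q + B^q*s + D)^q = A*s^(q+1) + B*s^q + B^q*s + D) :
    ∃ s : K, A*s^(q+1) + B*s^q + B^q*s + D = 0 := by
  by_contra h
  push_neg at h
  set f : K → K := fun s => A*s^(q+1) + B*s^q + B^q*s + D with hf
  set S : Finset K := Finset.univ.image f with hS
  have hmem : ∀ x ∈ (Finset.univ : Finset K), f x ∈ S := fun x _ =>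
    Finset.mem_image_of_mem f (Finset.mem_univ x)
  have hsum := Finset.card_eq_sum_card_fiberwise hmem
  have hfiber : ∀ c ∈ S, (Finset.univ.filter fun x => f x = c).card ≤ q + 1 := by
    intro c _
    have hBq : ∃ E : K, E = B ^ q := ⟨B ^ q, rfl⟩
    obtain ⟨E, hE⟩ := hBq
    set g : Polynomial K := Polynomial.C A * Polynomial.X^(q+1) + Polynomial.C B * Polynomial.X^q + Polynomial.C E * Polynomial.X + Polynomial.C (D - c) with hg
    have hgne : g ≠ 0 := by
      intro h0
      have hco : g.coeff (q+1) = A := by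
        simp [hg, Polynomial.coeff_X_pow, Polynomial.coeff_C]
        omega
      rw [h0] at hco
      simp at hco
      exact hA hco.symm
    have hdeg : g.natDegree ≤ q + 1 := by rw [hg]; compute_degree
    have hsub : (Finset.univ.filter fun x => f x = c) ⊆
        (Finset.univ.filter fun x => Polynomial.eval x g = 0) := by
      intro x hx
      simp only [Finset.mem_filter, Finset.mem_univ, true_and] at hx ⊢
      simp only [hg, hf] at hx ⊢
      simp [hE]
      linear_combination hx
    calc (Finset.univ.filter fun x => f x = c).card
        ≤ (Finset.univ.filter fun x => Polynomial.eval x g = 0).card := Finset.card_le_card hsub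
      _ ≤ g.natDegree := card_root_le g hgne
      _ ≤ q + 1 := hdeg
  have hScard : S.card ≤ q - 1 := by
    set g : Polynomial K := Polynomial.X^(q-1) - Polynomial.C 1 with hg
    have hgne : g ≠ 0 := by
      intro h0
      have hco : g.coeff 0 = -1 := by
        simp [hg, Polynomial.coeff_X_pow, Polynomial.coeff_C]
        omega
      rw [h0] at hco
      simp at hco
    have hdeg : g.natDegree ≤ q - 1 := by rw [hg]; compute_degree
    have hsub : S ⊆ (Finset.univ.filter fun x => Polynomial.eval x g = 0) := by
      intro c hc
      obtain ⟨s, _, rfl⟩ := Finset.mem_image.mp hc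
      simp only [Finset.mem_filter, Finset.mem_univ, true_and]
      have h1 : f s ^ q = f s := hval s
      have h2 : f s ≠ 0 := h s
      have h3 : f s ^ (q-1) * f s = f s := by
        rw [← pow_succ]
        have hq1 : q - 1 + 1 = q := by omega
        rw [hq1, h1]
      have h4 : f s ^ (q-1) = 1 := mul_right_cancel₀ h2 (by rw [h3, one_mul])
      simp [hg, h4]
    calc S.card ≤ _ := Finset.card_le_card hsub
      _ ≤ g.natDegree := card_root_le g hgne
      _ ≤ q - 1 := hdeg
  have hbig : Fintype.card K ≤ (q-1) * (q+1) := by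
    rw [← Finset.card_univ, hsum]
    calc ∑ c ∈ S, (Finset.univ.filter fun x => f x = c).card
        ≤ ∑ _c ∈ S, (q+1) := Finset.sum_le_sum hfiber
      _ = S.card * (q+1) := by rw [Finset.sum_const, smul_eq_mul]
      _ ≤ (q-1) * (q+1) := Nat.mul_le_mul_right _ hScard
  rw [hcard] at hbig
  have hsq : q ^ 2 = q * q := sq q
  obtain ⟨m, rfl⟩ : ∃ m, q = m + 2 := ⟨q - 2, by omega⟩
  have e : m + 2 - 1 = m + 1 := rfl
  rw [e] at hbig
  nlinarith

lemma key (q : ℕ) (hq2 : 2 ≤ q) (hcard : Fintype.card K = q ^ 2)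
    (frob : ∀ x y : K, (x + y)^q = x^q + y^q)
    (c0 c1 c2 : K) (hc2 : c2 ≠ 0) :
    ∃ Q0 Q1 Q2 : K, ¬(Q0 = 0 ∧ Q1 = 0 ∧ Q2 = 0) ∧
      Q0^(q+1) + Q1^(q+1) + Q2^(q+1) = 0 ∧
      Q0^q * c0 + Q1^q * c1 + Q2^q * c2 = 0 := by
  have hq0 : q ≠ 0 := by omega
  have pc : ∀ x : K, (x^q)^q = x := by
    intro x
    rw [← pow_mul, ← sq, ← hcard, FiniteField.pow_card]
  have negq : ∀ x : K, (-x)^q = -x^q := by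
    intro x
    have h := frob x (-x)
    rw [add_neg_cancel, zero_pow hq0] at h
    exact (eq_neg_of_add_eq_zero_right h.symm)
  have e1 : ∀ x : K, (x^(q+1))^q = x^(q+1) := by
    intro x
    rw [pow_succ, mul_pow, pc, mul_comm, ← pow_succ]
  have hval_gen : ∀ A B D x : K, A^q = A → D^q = D →
      (A*x^(q+1) + B*x^q + B^q*x + D)^q = A*x^(q+1) + B^q*x + B*x^q + D := by
    intro A B D x hAq hDq
    rw [frob, frob, frob, mul_pow, mul_pow, mul_pow, hAq, hDq, e1, pc, pc]
  obtain ⟨s, t, hst, heq⟩ : ∃ s t : K, ¬(s = 0 ∧ t = 0) ∧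
      (c0^(q+1) + c2^(q+1))*s^(q+1) + (c0*c1^q)*(s^q*t)
        + (c0^q*c1)*(s*t^q) + (c1^(q+1) + c2^(q+1))*t^(q+1) = 0 := by
    by_cases hA : c0^(q+1) + c2^(q+1) = 0
    · exact ⟨1, 0, by simp, by simp [hA, zero_pow hq0]⟩
    · have hAq : (c0^(q+1)+c2^(q+1))^q = c0^(q+1)+c2^(q+1) := by rw [frob, e1, e1]
      have hDq : (c1^(q+1)+c2^(q+1))^q = c1^(q+1)+c2^(q+1) := by rw [frob, e1, e1]
      have hval : ∀ x : K,
          ((c0^(q+1) + c2^(q+1))*x^(q+1) + (c0*c1^q)*x^q + (c0*c1^q)^q*x + (c1^(q+1) + c2^(q+1)))^q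
            = (c0^(q+1) + c2^(q+1))*x^(q+1) + (c0*c1^q)*x^q + (c0*c1^q)^q*x + (c1^(q+1) + c2^(q+1)) := by
        intro x
        rw [hval_gen _ _ _ x hAq hDq]
        ring
      obtain ⟨x, hx⟩ := exists_root q hq2 hcard _ (c0*c1^q) _ hA hval
      refine ⟨x, 1, by simp, ?_⟩
      have hBq : (c0*c1^q)^q = c0^q*c1 := by rw [mul_pow, pc]
      rw [hBq] at hx
      simp only [one_pow, mul_one]
      linear_combination hx
  set u : K := -(s^q * c0 + t^q * c1) * c2⁻¹ with hu_def
  have hu : u ^ q = -(s * c0^q + t * c1^q) * (c2^q)⁻¹ := by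
    rw [hu_def, mul_pow, negq, frob, mul_pow, mul_pow, pc, pc, inv_pow]
  refine ⟨s, t, u^q, ?_, ?_, ?_⟩
  · intro ⟨h1, h2, _⟩; exact hst ⟨h1, h2⟩
  · rw [pow_succ (u^q) q, pc, hu, hu_def]
    have hc2q : (c2:K)^q ≠ 0 := pow_ne_zero _ hc2
    field_simp
    linear_combination heq
  · rw [pc, hu_def]
    field_simp
    ring

end Aux

section Build

variable {K : Type*} [Field K] [Fintype K]


lemma herm_eval_pderiv (q : ℕ) (hqK : (q:K) = 0) (Q : Fin 3 → K) (i : Fin 3) :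
    eval Q (pderiv i (X 0 ^ (q+1) + X 1 ^ (q+1) + X 2 ^ (q+1) : MvPolynomial (Fin 3) K)) = Q i ^ q := by
  fin_cases i <;> simp [pderiv_pow, pderiv_X, Pi.single_apply, hqK]

lemma herm_eval (q : ℕ) (Q : Fin 3 → K) :
    eval Q (X 0 ^ (q+1) + X 1 ^ (q+1) + X 2 ^ (q+1) : MvPolynomial (Fin 3) K)
      = Q 0 ^ (q+1) + Q 1 ^ (q+1) + Q 2 ^ (q+1) := by simp

lemma build (q : ℕ) (hq0 : q ≠ 0) (hqK : (q:K) = 0) (a b c : K)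
    (hne : ¬(a = 0 ∧ b = 0 ∧ c = 0))
    (hnorm : a^(q+1) + b^(q+1) + c^(q+1) = 0)
    (P : Fin 3 → K) (htan : a^q * P 0 + b^q * P 1 + c^q * P 2 = 0) :
    ∃ Q : Fin 3 → K, SmoothPoint (X 0 ^ (q+1) + X 1 ^ (q+1) + X 2 ^ (q+1) : MvPolynomial (Fin 3) K) Q ∧
      OnTangentLine (X 0 ^ (q+1) + X 1 ^ (q+1) + X 2 ^ (q+1) : MvPolynomial (Fin 3) K) Q P := by
  refine ⟨![a, b, c], ⟨?_, ?_, ?_⟩, ?_⟩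
  · intro h0
    exact hne ⟨congrFun h0 0, congrFun h0 1, congrFun h0 2⟩
  · rw [herm_eval]
    simpa using hnorm
  · rcases not_and_or.mp hne with ha | h
    · exact ⟨0, by rw [herm_eval_pderiv q hqK]; simpa using pow_ne_zero q ha⟩
    · rcases not_and_or.mp h with hb | hc
      · exact ⟨1, by rw [herm_eval_pderiv q hqK]; simpa using pow_ne_zero q hb⟩
      · exact ⟨2, by rw [herm_eval_pderiv q hqK]; simpa using pow_ne_zero q hc⟩
  · unfold OnTangentLine
    rw [herm_eval_pderiv q hqK, herm_eval_pderiv q hqK, herm_eval_pderiv q hqK]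
    simpa using htan

end Build

theorem hermitian_curve_tangent_filling
    (q : ℕ) (hq : IsPrimePow q)
    (K : Type*) [Field K] [Fintype K] (hcard : Fintype.card K = q ^ 2) :
    TangentFilling
      (X 0 ^ (q + 1) + X 1 ^ (q + 1) + X 2 ^ (q + 1) : MvPolynomial (Fin 3) K) := by
  classical
  intro P hP
  have hq2 : 2 ≤ q := hq.two_le
  have hq0 : q ≠ 0 := by omega
  have hqK : (q : K) = 0 := by
    have h := FiniteField.cast_card_eq_zero K
    rw [hcard] at h
    push_cast at h
    exact pow_eq_zero_iff (by omega) |>.mp h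
  have frob : ∀ x y : K, (x + y)^q = x^q + y^q := by
    obtain ⟨p, k, hp, hk, rfl⟩ := hq
    rw [← Nat.prime_iff] at hp
    haveI : Fact p.Prime := ⟨hp⟩
    have hpK : (p : K) = 0 := by
      have hpk : ((p:K))^k = 0 := by push_cast at hqK ⊢; exact hqK
      exact pow_eq_zero_iff (by omega) |>.mp hpk
    have hr : ringChar K = p := by
      have hd : ringChar K ∣ p := ringChar.dvd hpK
      rcases (Nat.Prime.eq_one_or_self_of_dvd hp _ hd) with h1 | h1
      · exfalso
        haveI := ringChar.of_eq h1
        have h2 := CharP.cast_eq_zero K 1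
        rw [Nat.cast_one] at h2
        exact one_ne_zero h2
      · exact h1
    haveI : CharP K p := hr ▸ ringChar.charP K
    intro x y
    exact add_pow_char_pow x y p k
  have hex : ∃ i, P i ≠ 0 := by
    by_contra h
    push_neg at h
    exact hP (funext fun i => h i)
  obtain ⟨i, hi⟩ := hex
  fin_cases i
  · obtain ⟨a, b, c, hne, hnorm, htan⟩ := key q hq2 hcard frob (P 1) (P 2) (P 0) hi
    refine build q hq0 hqK c a b (by tauto) (by linear_combination hnorm) P
      (by linear_combination htan)
  · obtain ⟨a, b, c, hne, hnorm, htan⟩ := key q hq2 hcard frob (P 2) (P 0) (P 1) hi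
    refine build q hq0 hqK b c a (by tauto) (by linear_combination hnorm) P
      (by linear_combination htan)
  · obtain ⟨a, b, c, hne, hnorm, htan⟩ := key q hq2 hcard frob (P 0) (P 1) (P 2) hi
    refine build q hq0 hqK a b c (by tauto) (by linear_combination hnorm) P
      (by linear_combination htan)
end

section
/- Let 𝔽_q be a finite field of characteristic 3 with q > 3, and let C be the plane curve defined by F = x^{q-1} + y^{q-1} + z^{q-1} ∈ 𝔽_q[x,y,z]. Then C is not tangent-filling over 𝔽_q; in fact no tangent line T_Q C at a smooth 𝔽_q-point Q of C passes through the point [1:0:0]. -/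
open MvPolynomial

theorem special_curve_char_three_not_tangent_filling
    (K : Type*) [Field K] [Fintype K] (hchar : ringChar K = 3) (hq : 3 < Fintype.card K) :
    (∀ Q : Fin 3 → K,
      SmoothPoint (X 0 ^ (Fintype.card K - 1) + X 1 ^ (Fintype.card K - 1)
          + X 2 ^ (Fintype.card K - 1) : MvPolynomial (Fin 3) K) Q →
      ¬ OnTangentLine (X 0 ^ (Fintype.card K - 1) + X 1 ^ (Fintype.card K - 1)
          + X 2 ^ (Fintype.card K - 1) : MvPolynomial (Fin 3) K) Q ![1, 0, 0]) ∧
    ¬ TangentFilling (X 0 ^ (Fintype.card K - 1) + X 1 ^ (Fintype.card K - 1)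
        + X 2 ^ (Fintype.card K - 1) : MvPolynomial (Fin 3) K) := by
  haveI : CharP K 3 := hchar ▸ ringChar.charP K
  set q := Fintype.card K with hqdef
  have hcast : ((q - 1 : ℕ) : K) = -1 := by
    rw [Nat.cast_sub (by omega), FiniteField.cast_card_eq_zero]
    simp
  have key : ∀ Q : Fin 3 → K,
      SmoothPoint (X 0 ^ (q - 1) + X 1 ^ (q - 1) + X 2 ^ (q - 1) : MvPolynomial (Fin 3) K) Q →
      ¬ OnTangentLine (X 0 ^ (q - 1) + X 1 ^ (q - 1) + X 2 ^ (q - 1) : MvPolynomial (Fin 3) K)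
        Q ![1, 0, 0] := by
    rintro Q ⟨hQ0, hF, -⟩ hT
    simp only [OnTangentLine, map_add, pderiv_pow, pderiv_X, Nat.sub_sub] at hT
    simp [hcast] at hT
    obtain ⟨h0, -⟩ := hT
    simp only [map_add, map_pow, eval_X, h0, zero_pow (by omega : q - 1 ≠ 0), zero_add] at hF
    have p1 : ∀ a : K, a ≠ 0 → a ^ (q - 1) = 1 := fun a ha =>
      FiniteField.pow_card_sub_one_eq_one a ha
    by_cases h1 : Q 1 = 0 <;> by_cases h2 : Q 2 = 0
    · have hQ : Q = 0 := by funext i; fin_cases i <;> simp [h0, h1, h2]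
      exact hQ0 hQ
    · rw [h1, zero_pow (by omega : q - 1 ≠ 0), p1 _ h2] at hF; simp at hF
    · rw [h2, zero_pow (by omega : q - 1 ≠ 0), p1 _ h1] at hF; simp at hF
    · rw [p1 _ h1, p1 _ h2] at hF
      have : ((2 : ℕ) : K) = 0 := by push_cast; linear_combination hF
      rw [CharP.cast_eq_zero_iff K 3] at this
      omega
  refine ⟨key, fun h => ?_⟩
  obtain ⟨Q, hs, ht⟩ := h ![1, 0, 0] (fun hP => by simpa using congrFun hP 0)
  exact key Q hs ht
end

section
/- Let 𝔽_q be a finite field of characteristic p > 3, let C be the curve defined by F = x^{q-1} + y^{q-1} + z^{q-1} - 3(x+y+z)^{q-1}, let Q = [x₀:y₀:z₀] be an 𝔽_q-point of C (so x₀y₀z₀(x₀+y₀+z₀) ≠ 0) which is a smooth point, and let P = [a₀:b₀:c₀] ∈ ℙ²(𝔽_q). Then P lies on the tangent line T_Q C if and only if 3(a₀+b₀+c₀)/(x₀+y₀+z₀) = a₀/x₀ + b₀/y₀ + c₀/z₀ in 𝔽_q. -/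
open MvPolynomial

private lemma pderiv_three {K : Type*} [Field K] (i : Fin 3) :
    pderiv i (3 : MvPolynomial (Fin 3) K) = 0 := by
  rw [show (3 : MvPolynomial (Fin 3) K) = C 3 by rw [map_ofNat]]; simp

theorem special_curve_tangent_line_condition
    (K : Type*) [Field K] [Fintype K] (hp : 3 < ringChar K)
    (x₀ y₀ z₀ a₀ b₀ c₀ : K)
    (hQC : eval ![x₀, y₀, z₀]
        (X 0 ^ (Fintype.card K - 1) + X 1 ^ (Fintype.card K - 1) + X 2 ^ (Fintype.card K - 1)
          - 3 * (X 0 + X 1 + X 2) ^ (Fintype.card K - 1) : MvPolynomial (Fin 3) K) = 0)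
    (hnz : x₀ * y₀ * z₀ * (x₀ + y₀ + z₀) ≠ 0)
    (hsmooth : SmoothPoint
        (X 0 ^ (Fintype.card K - 1) + X 1 ^ (Fintype.card K - 1) + X 2 ^ (Fintype.card K - 1)
          - 3 * (X 0 + X 1 + X 2) ^ (Fintype.card K - 1) : MvPolynomial (Fin 3) K)
        ![x₀, y₀, z₀])
    (hP : ![a₀, b₀, c₀] ≠ (0 : Fin 3 → K)) :
    OnTangentLine
        (X 0 ^ (Fintype.card K - 1) + X 1 ^ (Fintype.card K - 1) + X 2 ^ (Fintype.card K - 1)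
          - 3 * (X 0 + X 1 + X 2) ^ (Fintype.card K - 1) : MvPolynomial (Fin 3) K)
        ![x₀, y₀, z₀] ![a₀, b₀, c₀]
      ↔ 3 * (a₀ + b₀ + c₀) / (x₀ + y₀ + z₀) = a₀ / x₀ + b₀ / y₀ + c₀ / z₀ := by
  have hx : x₀ ≠ 0 := fun h => hnz (by simp [h])
  have hy : y₀ ≠ 0 := fun h => hnz (by simp [h])
  have hz : z₀ ≠ 0 := fun h => hnz (by simp [h])
  have hs : x₀ + y₀ + z₀ ≠ 0 := fun h => hnz (by simp [h])
  have hq2 : 2 ≤ Fintype.card K := Fintype.one_lt_card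
  have hcast : ((Fintype.card K - 1 : ℕ) : K) = -1 := by
    rw [Nat.cast_sub (by omega), FiniteField.cast_card_eq_zero]; ring
  have hinv : ∀ v : K, v ≠ 0 → v ^ (Fintype.card K - 1 - 1) = v⁻¹ := by
    intro v hv
    refine eq_inv_of_mul_eq_one_left ?_
    rw [← pow_succ, show Fintype.card K - 1 - 1 + 1 = Fintype.card K - 1 by omega]
    exact FiniteField.pow_card_sub_one_eq_one v hv
  have h0 : eval ![x₀, y₀, z₀] (pderiv 0
      (X 0 ^ (Fintype.card K - 1) + X 1 ^ (Fintype.card K - 1) + X 2 ^ (Fintype.card K - 1)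
        - 3 * (X 0 + X 1 + X 2) ^ (Fintype.card K - 1) : MvPolynomial (Fin 3) K)) =
      -(x₀⁻¹) + 3 * (x₀ + y₀ + z₀)⁻¹ := by
    simp [pderiv_pow, pderiv_X, Pi.single_apply, pderiv_three, hcast,
      hinv _ hx, hinv _ hs]
  have h1 : eval ![x₀, y₀, z₀] (pderiv 1
      (X 0 ^ (Fintype.card K - 1) + X 1 ^ (Fintype.card K - 1) + X 2 ^ (Fintype.card K - 1)
        - 3 * (X 0 + X 1 + X 2) ^ (Fintype.card K - 1) : MvPolynomial (Fin 3) K)) =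
      -(y₀⁻¹) + 3 * (x₀ + y₀ + z₀)⁻¹ := by
    simp [pderiv_pow, pderiv_X, Pi.single_apply, pderiv_three, hcast,
      hinv _ hy, hinv _ hs]
  have h2 : eval ![x₀, y₀, z₀] (pderiv 2
      (X 0 ^ (Fintype.card K - 1) + X 1 ^ (Fintype.card K - 1) + X 2 ^ (Fintype.card K - 1)
        - 3 * (X 0 + X 1 + X 2) ^ (Fintype.card K - 1) : MvPolynomial (Fin 3) K)) =
      -(z₀⁻¹) + 3 * (x₀ + y₀ + z₀)⁻¹ := by
    simp [pderiv_pow, pderiv_X, Pi.single_apply, pderiv_three, hcast,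
      hinv _ hz, hinv _ hs]
  rw [OnTangentLine, h0, h1, h2]
  have key : (-(x₀⁻¹) + 3 * (x₀ + y₀ + z₀)⁻¹) * (![a₀, b₀, c₀] 0)
      + (-(y₀⁻¹) + 3 * (x₀ + y₀ + z₀)⁻¹) * (![a₀, b₀, c₀] 1)
      + (-(z₀⁻¹) + 3 * (x₀ + y₀ + z₀)⁻¹) * (![a₀, b₀, c₀] 2)
      = 3 * (a₀ + b₀ + c₀) / (x₀ + y₀ + z₀) - (a₀ / x₀ + b₀ / y₀ + c₀ / z₀) := by
    simp only [Matrix.cons_val_zero, Matrix.cons_val_one, Matrix.head_cons,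
      Matrix.cons_val_two, Matrix.tail_cons]
    field_simp
    ring
  rw [key, sub_eq_zero]
end

section
/- Let 𝔽_q be a finite field of characteristic p > 3. Then the affine plane curve over 𝔽_q defined by the equation y²(x-1) + y(x-1)(x-9) - x(x-9) = 0 has at least q - 3 distinct 𝔽_q-points, i.e., the set {(x,y) ∈ 𝔽_q × 𝔽_q : y²(x-1) + y(x-1)(x-9) - x(x-9) = 0} has cardinality at least q - 3. -/
theorem affine_curve_many_points
    (K : Type*) [Field K] [Fintype K] (hp : 3 < ringChar K) :
    Fintype.card K - 3 ≤
      Set.ncard {P : K × K |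
        P.2 ^ 2 * (P.1 - 1) + P.2 * (P.1 - 1) * (P.1 - 9) - P.1 * (P.1 - 9) = 0} := by
  have h2 : (2 : K) ≠ 0 := by
    intro h
    have := (ringChar.spec K 2).mp (by exact_mod_cast h)
    have := Nat.le_of_dvd (by norm_num) this
    omega
  -- choose r : a root of w^2+4w+16 if one exists, else 0
  obtain ⟨r, hr⟩ : ∃ r : K, (∃ w : K, w ^ 2 + 4 * w + 16 = 0) →
      r ^ 2 + 4 * r + 16 = 0 := by
    by_cases h : ∃ w : K, w ^ 2 + 4 * w + 16 = 0
    · obtain ⟨w, hw⟩ := h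
      exact ⟨w, fun _ => hw⟩
    · exact ⟨0, fun hh => absurd hh h⟩
  set S : Set (K × K) := {P : K × K |
        P.2 ^ 2 * (P.1 - 1) + P.2 * (P.1 - 1) * (P.1 - 9) - P.1 * (P.1 - 9) = 0} with hS
  set T : Set K := ({0, -4, r} : Set K)ᶜ with hT
  set f : K → K × K := fun u => ((u + 2) * (u + 8) / (2 * u),
    (4 - u) * (u + 2) / (2 * (u + 4))) with hf
  have hmem : ∀ u ∈ T, u ≠ 0 ∧ u + 4 ≠ 0 ∧ u ≠ r := by
    intro u hu
    simp only [hT, Set.mem_compl_iff, Set.mem_insert_iff, Set.mem_singleton_iff] at hu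
    push_neg at hu
    refine ⟨hu.1, ?_, hu.2.2⟩
    intro h; apply hu.2.1; linear_combination h
  -- image is in S
  have himg : f '' T ⊆ S := by
    rintro _ ⟨u, hu, rfl⟩
    obtain ⟨hu0, hu4, -⟩ := hmem u hu
    simp only [hS, hf, Set.mem_setOf_eq]
    have d1 : (2 : K) * u ≠ 0 := mul_ne_zero h2 hu0
    have d2 : (2 : K) * (u + 4) ≠ 0 := mul_ne_zero h2 hu4
    field_simp
    ring
  -- injectivity
  have hinj : Set.InjOn f T := by
    intro u hu v hv huv
    obtain ⟨hu0, hu4, hur⟩ := hmem u hu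
    obtain ⟨hv0, hv4, hvr⟩ := hmem v hv
    have hx := congrArg Prod.fst huv
    have hy := congrArg Prod.snd huv
    simp only [hf] at hx hy
    rw [div_eq_div_iff (mul_ne_zero h2 hu0) (mul_ne_zero h2 hv0)] at hx
    rw [div_eq_div_iff (mul_ne_zero h2 hu4) (mul_ne_zero h2 hv4)] at hy
    by_contra hne
    have hsub : u - v ≠ 0 := sub_ne_zero.mpr hne
    -- from hx: (u-v)*(u*v-16)*2 = 0
    have h1 : u * v - 16 = 0 := by
      have : (u - v) * ((u * v - 16) * 2) = 0 := by linear_combination hx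
      rcases mul_eq_zero.mp this with h | h
      · exact absurd h hsub
      · rcases mul_eq_zero.mp h with h | h
        · exact h
        · exact absurd h h2
    -- from hy: (v-u)*(u*v+4u+4v)*2 = 0
    have h2' : u * v + 4 * u + 4 * v = 0 := by
      have : (u - v) * ((u * v + 4 * u + 4 * v) * 2) = 0 := by linear_combination -hy
      rcases mul_eq_zero.mp this with h | h
      · exact absurd h hsub
      · rcases mul_eq_zero.mp h with h | h
        · exact h
        · exact absurd h h2
    -- so u+v = -4, uv = 16, both roots of w^2+4w+16
    have h4 : (4 : K) ≠ 0 := by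
      intro h; apply h2
      have : (2 : K) * 2 = 0 := by linear_combination h
      rcases mul_eq_zero.mp this with h | h <;> exact h
    have hsum : u + v + 4 = 0 := by
      have : (4 : K) * (u + v + 4) = 0 := by linear_combination h2' - h1
      rcases mul_eq_zero.mp this with h | h
      · exact absurd h h4
      · exact h
    have hquadu : u ^ 2 + 4 * u + 16 = 0 := by
      have hv : v = -4 - u := by linear_combination hsum
      rw [hv] at h1
      linear_combination -h1
    have hquadv : v ^ 2 + 4 * v + 16 = 0 := by
      have hu' : u = -4 - v := by linear_combination hsum
      rw [hu'] at h1
      linear_combination -h1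
    have hrq : r ^ 2 + 4 * r + 16 = 0 := hr ⟨u, hquadu⟩
    -- (u-r)(u+r+4)=0
    have hu_cases : u = r ∨ u + r + 4 = 0 := by
      have : (u - r) * (u + r + 4) = 0 := by linear_combination hquadu - hrq
      rcases mul_eq_zero.mp this with h | h
      · exact Or.inl (sub_eq_zero.mp h)
      · exact Or.inr h
    have hv_cases : v = r ∨ v + r + 4 = 0 := by
      have : (v - r) * (v + r + 4) = 0 := by linear_combination hquadv - hrq
      rcases mul_eq_zero.mp this with h | h
      · exact Or.inl (sub_eq_zero.mp h)
      · exact Or.inr h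
    rcases hu_cases with h | hu'
    · exact hur h
    rcases hv_cases with h | hv'
    · exact hvr h
    exact hne (by linear_combination hu' - hv')
  -- cardinality count
  have hTcard : Fintype.card K - 3 ≤ T.ncard := by
    have hcompl : ({0, -4, r} : Set K).ncard + T.ncard = Fintype.card K := by
      rw [hT, ← Nat.card_eq_fintype_card]
      exact Set.ncard_add_ncard_compl _
    have hsmall : ({0, -4, r} : Set K).ncard ≤ 3 := by
      apply le_trans (Set.ncard_insert_le _ _)
      have : ({-4, r} : Set K).ncard ≤ 2 := by
        apply le_trans (Set.ncard_insert_le _ _)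
        simp
      omega
    omega
  calc Fintype.card K - 3 ≤ T.ncard := hTcard
    _ = (f '' T).ncard := (Set.ncard_image_of_injOn hinj).symm
    _ ≤ S.ncard := Set.ncard_le_ncard himg (Set.toFinite S)
end

section
/- Let 𝔽_q be a finite field of characteristic 2, and let C be a plane conic over 𝔽_q defined by a homogeneous polynomial F ∈ 𝔽_q[x,y,z] of degree 2 having no singular points over the algebraic closure of 𝔽_q. Then C is tangent-filling over 𝔽_q: every point P ∈ ℙ²(𝔽_q) lies on the tangent line T_Q C at some smooth 𝔽_q-point Q of C. -/
open MvPolynomial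

/-!
In characteristic 2 the gradient of `F = ∑ Aᵢ xᵢ² + N₀ x₁x₂ + N₁ x₀x₂ + N₂ x₀x₁` at `Q` is the
cross product `N × Q`, so every tangent line passes through the nucleus `N`, and
`F(sN + W) = s² F(N) + F(W)`. Smoothness over the algebraic closure forces `N ≠ 0` and
`F(N) ≠ 0`. Given `P`, choose `W` with `N × W ≠ 0` and `det(N, W, P) = 0`. Squaring is bijective
on a finite field of characteristic 2, so `F(sN + W) = 0` for some `s`, and `Q = sN + W` is a
smooth point whose tangent line, the line `NW`, contains `P`.
-/

open Matrix Finsupp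

section

variable {R : Type*} [CommRing R]

theorem exists_cross_ne_zero {N : Fin 3 → R} (hN : N ≠ 0) : ∃ W, N ⨯₃ W ≠ 0 := by
  by_contra! h
  have h0 := congrFun (h ![1, 0, 0])
  have h1 := congrFun (h ![0, 1, 0])
  simp only [cross_apply, Pi.zero_apply] at h0 h1
  apply hN
  ext i
  fin_cases i
  · simpa using h1 2
  · simpa using h0 2
  · simpa using h0 1

theorem exists_cross_ne_zero_dotProduct_eq_zero {N : Fin 3 → R} (hN : N ≠ 0) (P : Fin 3 → R) :
    ∃ W, N ⨯₃ W ≠ 0 ∧ N ⨯₃ W ⬝ᵥ P = 0 := by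
  by_cases hP : N ⨯₃ P = 0
  · obtain ⟨W, hW⟩ := exists_cross_ne_zero hN
    refine ⟨W, hW, ?_⟩
    rw [dotProduct_comm, triple_product_permutation, triple_product_permutation,
      ← cross_anticomm, hP, neg_zero, dotProduct_zero]
  · exact ⟨P, hP, by rw [dotProduct_comm, dot_cross_self]⟩

end

theorem Finsupp.eq_of_degree_eq_two {m : Fin 3 →₀ ℕ} (hm : m.degree = 2) :
    m = single 0 2 ∨ m = single 1 2 ∨ m = single 2 2 ∨ m = single 1 1 + single 2 1 ∨
      m = single 0 1 + single 2 1 ∨ m = single 0 1 + single 1 1 := by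
  have hsum : m 0 + m 1 + m 2 = 2 := by
    rwa [Finsupp.degree_eq_sum, Fin.sum_univ_three] at hm
  have hm : m = single 0 (m 0) + single 1 (m 1) + single 2 (m 2) := by
    ext i; fin_cases i <;> simp
  rw [hm]
  generalize m 0 = x, m 1 = y, m 2 = z at hsum
  have : x ≤ 2 := by omega
  have : y ≤ 2 := by omega
  have : z ≤ 2 := by omega
  interval_cases x <;> interval_cases y <;> interval_cases z <;> first | omega | simp

section Conic

variable {R : Type*} [CommRing R]

noncomputable def conic (A N : Fin 3 → R) : MvPolynomial (Fin 3) R :=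
  monomial (single 0 2) (A 0) + monomial (single 1 2) (A 1) + monomial (single 2 2) (A 2)
    + monomial (single 1 1 + single 2 1) (N 0) + monomial (single 0 1 + single 2 1) (N 1)
    + monomial (single 0 1 + single 1 1) (N 2)

noncomputable def evalGradient (F : MvPolynomial (Fin 3) R) (Q : Fin 3 → R) : Fin 3 → R :=
  fun i => eval Q (pderiv i F)

theorem smoothPoint_iff {F : MvPolynomial (Fin 3) R} {Q : Fin 3 → R} :
    SmoothPoint F Q ↔ Q ≠ 0 ∧ eval Q F = 0 ∧ evalGradient F Q ≠ 0 := by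
  simp [SmoothPoint, evalGradient, _root_.funext_iff]

theorem onTangentLine_iff {F : MvPolynomial (Fin 3) R} {Q P : Fin 3 → R} :
    OnTangentLine F Q P ↔ evalGradient F Q ⬝ᵥ P = 0 := by
  simp [OnTangentLine, evalGradient, dotProduct, Fin.sum_univ_three]

theorem eval_conic (A N Q : Fin 3 → R) :
    eval Q (conic A N) = A 0 * Q 0 ^ 2 + A 1 * Q 1 ^ 2 + A 2 * Q 2 ^ 2
      + N 0 * (Q 1 * Q 2) + N 1 * (Q 0 * Q 2) + N 2 * (Q 0 * Q 1) := by
  simp [conic, eval_monomial, Fin.prod_univ_three, Finsupp.single_apply]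

theorem evalGradient_conic (A N Q : Fin 3 → R) :
    evalGradient (conic A N) Q = ![2 * A 0 * Q 0 + N 2 * Q 1 + N 1 * Q 2,
      N 2 * Q 0 + 2 * A 1 * Q 1 + N 0 * Q 2, N 1 * Q 0 + N 0 * Q 1 + 2 * A 2 * Q 2] := by
  ext i
  fin_cases i <;>
  · simp [evalGradient, conic, pderiv_monomial, eval_monomial, Finsupp.single_apply,
      Fin.prod_univ_three]
    ring

theorem map_conic {S : Type*} [CommRing S] (φ : R →+* S) (A N : Fin 3 → R) :
    map φ (conic A N) = conic (φ ∘ A) (φ ∘ N) := by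
  simp [conic, map_monomial]

theorem isHomogeneous_conic (A N : Fin 3 → R) : (conic A N).IsHomogeneous 2 := by
  unfold conic
  repeat' apply IsHomogeneous.add
  all_goals apply isHomogeneous_monomial; simp [Finsupp.degree_single]

theorem MvPolynomial.IsHomogeneous.exists_eq_conic {F : MvPolynomial (Fin 3) R}
    (hF : F.IsHomogeneous 2) : ∃ A N, F = conic A N := by
  refine ⟨fun i => coeff (single i 2) F, ![coeff (single 1 1 + single 2 1) F,
    coeff (single 0 1 + single 2 1) F, coeff (single 0 1 + single 1 1) F], ?_⟩
  ext m
  by_cases hm : m.degree = 2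
  · rcases Finsupp.eq_of_degree_eq_two hm with rfl | rfl | rfl | rfl | rfl | rfl <;>
      simp [conic, coeff_monomial, Finsupp.ext_iff, Fin.forall_fin_succ, Finsupp.single_apply]
  · rw [hF.coeff_eq_zero hm, (isHomogeneous_conic _ _).coeff_eq_zero hm]

theorem evalGradient_conic_of_charTwo [CharP R 2] (A N Q : Fin 3 → R) :
    evalGradient (conic A N) Q = N ⨯₃ Q := by
  ext i
  fin_cases i <;>
    simp [evalGradient_conic, cross_apply, CharTwo.two_eq_zero, CharTwo.sub_eq_add] <;> ring

theorem eval_conic_smul_add_of_charTwo [CharP R 2] (A N W : Fin 3 → R) (s : R) :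
    eval (s • N + W) (conic A N) = s ^ 2 * eval N (conic A N) + eval W (conic A N) := by
  simp only [eval_conic, Pi.add_apply, Pi.smul_apply, smul_eq_mul]
  linear_combination (s * (N 0 * N 1 * W 2 + N 0 * N 2 * W 1 + N 1 * N 2 * W 0
    + A 0 * N 0 * W 0 + A 1 * N 1 * W 1 + A 2 * N 2 * W 2)) * CharTwo.two_eq_zero (R := R)

end Conic

theorem exists_ne_zero_eval_conic_eq_zero {L : Type*} [Field L] [IsAlgClosed L]
    (A : Fin 3 → L) : ∃ Q ≠ 0, eval Q (conic A 0) = 0 := by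
  by_cases hA : A 0 = 0
  · exact ⟨![1, 0, 0], by simp, by simp [eval_conic, hA]⟩
  · obtain ⟨t, ht⟩ := IsAlgClosed.exists_pow_nat_eq (-A 1 / A 0) two_pos
    refine ⟨![t, 1, 0], by simp, ?_⟩
    simp [eval_conic, ht, mul_div_cancel₀ _ hA]

theorem tangentFilling_conic {K : Type*} [Field K] [Fintype K] (hchar : ringChar K = 2)
    {A N : Fin 3 → K} (hN : N ≠ 0) (hFN : eval N (conic A N) ≠ 0) :
    TangentFilling (conic A N) := by
  have := ringChar.of_eq hchar
  intro P _
  obtain ⟨W, hW, hWP⟩ := exists_cross_ne_zero_dotProduct_eq_zero hN P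
  obtain ⟨s, hs⟩ :=
    FiniteField.isSquare_of_char_two hchar (eval W (conic A N) / eval N (conic A N))
  have hgrad : evalGradient (conic A N) (s • N + W) = N ⨯₃ W := by
    rw [evalGradient_conic_of_charTwo, map_add, map_smul, cross_self, smul_zero, zero_add]
  have hQ : eval (s • N + W) (conic A N) = 0 := by
    rw [eval_conic_smul_add_of_charTwo, sq, ← hs, div_mul_cancel₀ _ hFN,
      CharTwo.add_self_eq_zero]
  have hQ0 : s • N + W ≠ 0 := fun h0 ↦ hW <| by
    rw [← hgrad, h0, evalGradient_conic_of_charTwo, map_zero]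
  exact ⟨s • N + W, smoothPoint_iff.2 ⟨hQ0, hQ, hgrad ▸ hW⟩,
    onTangentLine_iff.2 (hgrad ▸ hWP)⟩

theorem smooth_conic_char_two_tangent_filling
    (K : Type*) [Field K] [Fintype K] (hchar : ringChar K = 2)
    (F : MvPolynomial (Fin 3) K) (hF : F.IsHomogeneous 2)
    -- the conic has no singular point over the algebraic closure:
    (hsmooth : ∀ P : Fin 3 → AlgebraicClosure K, P ≠ 0 →
      ¬ (eval P (MvPolynomial.map (algebraMap K (AlgebraicClosure K)) F) = 0 ∧
        ∀ i : Fin 3,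
          eval P (pderiv i (MvPolynomial.map (algebraMap K (AlgebraicClosure K)) F)) = 0)) :
    TangentFilling F := by
  obtain ⟨A, N, rfl⟩ := hF.exists_eq_conic
  set φ := algebraMap K (AlgebraicClosure K)
  have := ringChar.of_eq hchar
  have := charP_of_injective_algebraMap φ.injective 2
  have hnonsing :
      ∀ Q ≠ 0, eval Q (conic (φ ∘ A) (φ ∘ N)) = 0 → (φ ∘ N) ⨯₃ Q ≠ 0 := by
    intro Q hQ hFQ hgrad
    refine hsmooth Q hQ ⟨by rwa [map_conic], congrFun (?_ : evalGradient _ Q = 0)⟩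
    rwa [map_conic, evalGradient_conic_of_charTwo]
  have hN : N ≠ 0 := by
    rintro rfl
    obtain ⟨Q, hQ, hFQ⟩ := exists_ne_zero_eval_conic_eq_zero (φ ∘ A)
    exact hnonsing Q hQ (by simpa using hFQ) (by simp)
  have hFN : eval N (conic A N) ≠ 0 := fun h ↦
    hnonsing (φ ∘ N) (by simpa [Function.ne_iff] using hN)
      (by rw [← map_conic, eval_map, ← eval₂_comp, h, map_zero]) (cross_self _)
  exact tangentFilling_conic hchar hN hFN
end
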